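/- Let Γ : Δ₂ → E be a map on the 2-simplex of [0,T] into a Banach space E with Γ_{t,t} = 0, ‖Γ‖_α < ∞ and ‖δΓ‖_β < ∞ for some 0 < α ≤ 1 < β. Then there is a unique I Γ ∈ C^α([0,T];E) with (IΓ)_0 = 0 and ‖(IΓ)_{s,t} − Γ_{s,t}‖_E ≤ C ‖δΓ‖_β |t−s|^β, C depending only on β; moreover (IΓ)_t is the limit of Riemann sums Σ_i Γ_{t_i,t_{i+1}} over partitions with mesh tending to zero, and ‖IΓ‖_{C^α} ≤ C' (‖Γ‖_α + ‖δΓ‖_β). -/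

import Mathlib

/-!
The heart of the argument is Young's maximal inequality. A partition of `[s, t]` into `m + 2`
intervals has a point whose two neighbours are at distance at most `2 (t - s) / (m + 1)`, and
removing it changes the Riemann sum of `Γ` by one value of `δΓ`, of norm at most
`Kb (2 (t - s) / (m + 1)) ^ β`. Removing points one at a time, every Riemann sum over `[s, t]` is
within `2 ^ β ζ(β) Kb (t - s) ^ β` of `Γ s t`.

`I t` is the limit of the Riemann sums along the dyadic grid of mesh `T / 2 ^ n` cut off at `t`.
Halving the mesh moves these sums by at most `Kb (T / 2 ^ n) ^ (β - 1) T`, so they converge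
geometrically; the grids cut off at `s`, at `t` and restricted to `[s, t]` differ only in the cell
containing `s`, so the increments `I t - I s` inherit Young's bound. Finally, whenever
`‖I t - I s - Γ s t‖ ≤ K (t - s) ^ β`, a Riemann sum of mesh `h` is within `K h ^ (β - 1) t` of
`I t - I 0`: this gives the convergence of Riemann sums and, comparing two such `I`, uniqueness.
-/

universe u

def IsPartition {n : ℕ} (s t : ℝ) (τ : Fin (n + 1) → ℝ) : Prop :=
  Monotone τ ∧ τ 0 = s ∧ τ (Fin.last n) = t

def MeshLE {n : ℕ} (τ : Fin (n + 1) → ℝ) (δ : ℝ) : Prop :=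
  ∀ i : Fin n, τ i.succ - τ i.castSucc ≤ δ

open Finset Filter Topology

namespace Sewing

variable {E : Type*}

theorem rpow_le_rpow_sub_one_mul {x d β : ℝ} (hβ : 1 ≤ β) (hx : 0 ≤ x) (hxd : x ≤ d) :
    x ^ β ≤ d ^ (β - 1) * x := by
  calc x ^ β = x ^ (β - 1) * x ^ (1 : ℝ) := by
        rw [← Real.rpow_add' hx (by linarith), sub_add_cancel]
    _ ≤ d ^ (β - 1) * x := by
        rw [Real.rpow_one]
        exact mul_le_mul_of_nonneg_right (Real.rpow_le_rpow hx hxd (by linarith)) hx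

theorem div_two_pow_rpow {T : ℝ} (hT : 0 ≤ T) (γ : ℝ) (n : ℕ) :
    (T / 2 ^ n) ^ γ = T ^ γ * ((2 : ℝ) ^ (-γ)) ^ n := by
  rw [Real.div_rpow hT (by positivity), ← Real.rpow_natCast, ← Real.rpow_natCast,
    ← Real.rpow_mul (by norm_num), ← Real.rpow_mul (by norm_num), mul_comm, neg_mul,
    Real.rpow_neg (by positivity), div_eq_mul_inv]

theorem tendsto_div_two_pow_rpow {T γ : ℝ} (hT : 0 ≤ T) (hγ : 0 < γ) :
    Tendsto (fun n : ℕ => (T / 2 ^ n) ^ γ) atTop (𝓝 0) := by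
  have hr : (2 : ℝ) ^ (-γ) < 1 := Real.rpow_lt_one_of_one_lt_of_neg one_lt_two (neg_neg_of_pos hγ)
  simpa [div_two_pow_rpow hT] using
    (tendsto_pow_atTop_nhds_zero_of_lt_one (by positivity) hr).const_mul (T ^ γ)

theorem summable_inv_succ_rpow {β : ℝ} (hβ : 1 < β) :
    Summable fun j : ℕ => (((j : ℝ) + 1) ^ β)⁻¹ := by
  simpa using (summable_nat_add_iff 1).2 (Real.summable_nat_rpow_inv.2 hβ)

noncomputable def sewingConst (β : ℝ) : ℝ :=
  2 ^ β * ∑' j : ℕ, (((j : ℝ) + 1) ^ β)⁻¹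

theorem sewingConst_pos {β : ℝ} (hβ : 1 < β) : 0 < sewingConst β :=
  mul_pos (by positivity)
    ((summable_inv_succ_rpow hβ).tsum_pos (fun _ => by positivity) 0 (by positivity))

theorem norm_sum_le_of_norm_le_rpow [SeminormedAddCommGroup E] {g : ℕ → E} {σ : ℕ → ℝ} {n : ℕ}
    {K h β : ℝ} (hσ : Monotone σ) (hβ : 1 ≤ β) (hK : 0 ≤ K)
    (hmesh : ∀ k < n, σ (k + 1) - σ k ≤ h) (hg : ∀ k < n, ‖g k‖ ≤ K * (σ (k + 1) - σ k) ^ β) :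
    ‖∑ k ∈ range n, g k‖ ≤ K * h ^ (β - 1) * (σ n - σ 0) := by
  calc ‖∑ k ∈ range n, g k‖ ≤ ∑ k ∈ range n, K * h ^ (β - 1) * (σ (k + 1) - σ k) := by
        refine norm_sum_le_of_le _ fun k hk => (hg k (mem_range.1 hk)).trans ?_
        rw [mul_assoc]
        exact mul_le_mul_of_nonneg_left (rpow_le_rpow_sub_one_mul hβ
          (sub_nonneg.2 (hσ k.le_succ)) (hmesh k (mem_range.1 hk))) hK
    _ = K * h ^ (β - 1) * (σ n - σ 0) := by rw [← mul_sum, sum_range_sub]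

def partitionSum [AddCommMonoid E] (Γ : ℝ → ℝ → E) (σ : ℕ → ℝ) (n : ℕ) : E :=
  ∑ k ∈ range n, Γ (σ k) (σ (k + 1))

theorem partitionSum_skip [AddCommGroup E] (Γ : ℝ → ℝ → E) (σ : ℕ → ℝ) {j m : ℕ} (hj : j ≤ m) :
    partitionSum Γ (fun k => σ (if k ≤ j then k else k + 1)) (m + 1) =
      partitionSum Γ σ (m + 2) -
        (Γ (σ j) (σ (j + 1)) + Γ (σ (j + 1)) (σ (j + 2)) - Γ (σ j) (σ (j + 2))) := by
  obtain ⟨r, rfl⟩ := Nat.exists_eq_add_of_le hj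
  rw [show j + r + 1 = j + 1 + r by ring, show j + r + 2 = j + 2 + r by ring]
  simp only [partitionSum, sum_range_add, sum_range_succ]
  have hlow : ∑ k ∈ range j, Γ (σ (if k ≤ j then k else k + 1))
      (σ (if k + 1 ≤ j then k + 1 else k + 1 + 1)) = ∑ k ∈ range j, Γ (σ k) (σ (k + 1)) :=
    sum_congr rfl fun k hk => by
      rw [if_pos (by simp at hk; omega), if_pos (by simp at hk; omega)]
  have hhigh : ∑ x ∈ range r, Γ (σ (if j + 1 + x ≤ j then j + 1 + x else j + 1 + x + 1))
      (σ (if j + 1 + x + 1 ≤ j then j + 1 + x + 1 else j + 1 + x + 1 + 1)) =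
      ∑ x ∈ range r, Γ (σ (j + 2 + x)) (σ (j + 2 + x + 1)) :=
    sum_congr rfl fun x _ => by
      rw [if_neg (by omega), if_neg (by omega)]
      ring_nf
  rw [hlow, hhigh, if_pos le_rfl, if_neg (by omega)]
  abel

theorem exists_sub_le_two_mul_inv {σ : ℕ → ℝ} (hσ : Monotone σ) (m : ℕ) :
    ∃ j ≤ m, σ (j + 2) - σ j ≤ 2 * ((m : ℝ) + 1)⁻¹ * (σ (m + 2) - σ 0) := by
  have htel : ∑ j ∈ range (m + 1), (σ (j + 2) - σ j) =
      (σ (m + 2) - σ 1) + (σ (m + 1) - σ 0) := by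
    rw [← sum_range_sub (fun j => σ (j + 1)), ← sum_range_sub σ, ← sum_add_distrib]
    exact sum_congr rfl fun j _ => by ring
  have hsum : ∑ j ∈ range (m + 1), (σ (j + 2) - σ j) ≤
      ∑ _j ∈ range (m + 1), 2 * ((m : ℝ) + 1)⁻¹ * (σ (m + 2) - σ 0) := by
    rw [htel, sum_const, card_range, nsmul_eq_mul, Nat.cast_succ, ← mul_assoc,
      mul_left_comm, mul_inv_cancel₀ (by positivity), mul_one]
    linarith [hσ (Nat.zero_le 1), hσ (m + 1).le_succ]
  obtain ⟨j, hj, hle⟩ := exists_le_of_sum_le (nonempty_range_iff.2 m.succ_ne_zero) hsum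
  exact ⟨j, Nat.lt_succ_iff.1 (mem_range.1 hj), hle⟩

section Young

variable [SeminormedAddCommGroup E] {Γ : ℝ → ℝ → E} {β Kb T : ℝ}

theorem norm_add_sub_le
    (hδ : ∀ s u t : ℝ, 0 ≤ s → s ≤ u → u ≤ t → t ≤ T →
      ‖Γ s t - Γ s u - Γ u t‖ ≤ Kb * (t - s) ^ β)
    {s u t : ℝ} (hs : 0 ≤ s) (hsu : s ≤ u) (hut : u ≤ t) (htT : t ≤ T) :
    ‖Γ s u + Γ u t - Γ s t‖ ≤ Kb * (t - s) ^ β := by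
  rw [← norm_neg, show -(Γ s u + Γ u t - Γ s t) = Γ s t - Γ s u - Γ u t by abel]
  exact hδ s u t hs hsu hut htT

theorem norm_partitionSum_succ_sub_le (hβ : 0 ≤ β) (hKb : 0 ≤ Kb)
    (hδ : ∀ s u t : ℝ, 0 ≤ s → s ≤ u → u ≤ t → t ≤ T →
      ‖Γ s t - Γ s u - Γ u t‖ ≤ Kb * (t - s) ^ β)
    (n : ℕ) {σ : ℕ → ℝ} (hσ : Monotone σ) (h0 : 0 ≤ σ 0) (hT : σ (n + 1) ≤ T) :
    ‖partitionSum Γ σ (n + 1) - Γ (σ 0) (σ (n + 1))‖ ≤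
      2 ^ β * (∑ j ∈ range n, (((j : ℝ) + 1) ^ β)⁻¹) * Kb * (σ (n + 1) - σ 0) ^ β := by
  induction n generalizing σ with
  | zero => simp [partitionSum]
  | succ m ih =>
    obtain ⟨j, hjm, hj⟩ := exists_sub_le_two_mul_inv hσ m
    set σ' : ℕ → ℝ := fun k => σ (if k ≤ j then k else k + 1)
    have hσ'mono : Monotone σ' := hσ.comp fun a b hab => by split_ifs <;> omega
    have h0' : σ' 0 = σ 0 := by simp [σ']
    have hlast : σ' (m + 1) = σ (m + 2) := by simp [σ', show ¬(m + 1 ≤ j) by omega]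
    have hremoved : ‖Γ (σ j) (σ (j + 1)) + Γ (σ (j + 1)) (σ (j + 2)) - Γ (σ j) (σ (j + 2))‖ ≤
        2 ^ β * (((m : ℝ) + 1) ^ β)⁻¹ * Kb * (σ (m + 2) - σ 0) ^ β :=
      calc _ ≤ Kb * (σ (j + 2) - σ j) ^ β :=
            norm_add_sub_le hδ (h0.trans (hσ (Nat.zero_le j))) (hσ j.le_succ)
              (hσ (j + 1).le_succ) ((hσ (by omega)).trans hT)
        _ ≤ Kb * (2 * ((m : ℝ) + 1)⁻¹ * (σ (m + 2) - σ 0)) ^ β := by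
            gcongr
            exact sub_nonneg.2 (hσ (by omega))
        _ = _ := by
            have : 0 ≤ σ (m + 2) - σ 0 := sub_nonneg.2 (hσ (Nat.zero_le _))
            rw [Real.mul_rpow (by positivity) this, Real.mul_rpow (by norm_num) (by positivity),
              Real.inv_rpow (by positivity)]
            ring
    have hrest := ih hσ'mono (h0'.symm ▸ h0) (hlast.symm ▸ hT)
    rw [h0', hlast, partitionSum_skip Γ σ hjm] at hrest
    calc ‖partitionSum Γ σ (m + 2) - Γ (σ 0) (σ (m + 2))‖
        ≤ ‖partitionSum Γ σ (m + 2) - (Γ (σ j) (σ (j + 1)) + Γ (σ (j + 1)) (σ (j + 2)) -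
            Γ (σ j) (σ (j + 2))) - Γ (σ 0) (σ (m + 2))‖ +
          ‖Γ (σ j) (σ (j + 1)) + Γ (σ (j + 1)) (σ (j + 2)) - Γ (σ j) (σ (j + 2))‖ := by
          refine (norm_add_le _ _).trans_eq' ?_
          congr 1
          abel
      _ ≤ _ := by
          rw [sum_range_succ]
          linarith

theorem norm_partitionSum_sub_le (hβ : 1 < β) (hKb : 0 ≤ Kb) (hzero : ∀ t : ℝ, Γ t t = 0)
    (hδ : ∀ s u t : ℝ, 0 ≤ s → s ≤ u → u ≤ t → t ≤ T →
      ‖Γ s t - Γ s u - Γ u t‖ ≤ Kb * (t - s) ^ β)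
    {σ : ℕ → ℝ} (n : ℕ) (hσ : Monotone σ) (h0 : 0 ≤ σ 0) (hT : σ n ≤ T) :
    ‖partitionSum Γ σ n - Γ (σ 0) (σ n)‖ ≤ sewingConst β * Kb * (σ n - σ 0) ^ β := by
  cases n with
  | zero => simp [partitionSum, hzero, Real.zero_rpow (by positivity : β ≠ 0)]
  | succ n =>
    refine (norm_partitionSum_succ_sub_le (by positivity) hKb hδ n hσ h0 hT).trans ?_
    unfold sewingConst
    gcongr
    · exact Real.rpow_nonneg (sub_nonneg.2 (hσ (Nat.zero_le _))) _
    exact (summable_inv_succ_rpow hβ).sum_le_tsum _ fun _ _ => by positivity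

theorem norm_partitionSum_sub_sub_le {I : ℝ → E} {σ : ℕ → ℝ} {n : ℕ} {K h : ℝ} (hβ : 1 ≤ β)
    (hK : 0 ≤ K) (hI : ∀ s t : ℝ, 0 ≤ s → s ≤ t → t ≤ T → ‖I t - I s - Γ s t‖ ≤ K * (t - s) ^ β)
    (hσ : Monotone σ) (h0 : 0 ≤ σ 0) (hT : σ n ≤ T) (hmesh : ∀ k < n, σ (k + 1) - σ k ≤ h) :
    ‖partitionSum Γ σ n - (I (σ n) - I (σ 0))‖ ≤ K * h ^ (β - 1) * (σ n - σ 0) := by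
  rw [← sum_range_sub (fun k => I (σ k)), partitionSum, ← sum_sub_distrib]
  refine norm_sum_le_of_norm_le_rpow hσ hβ hK hmesh fun k hk => ?_
  rw [norm_sub_rev]
  exact hI _ _ (h0.trans (hσ (Nat.zero_le k))) (hσ k.le_succ) ((hσ hk).trans hT)

end Young

noncomputable def dyadicPoint (T : ℝ) (n : ℕ) (s t : ℝ) (k : ℕ) : ℝ :=
  min (max (k * (T / 2 ^ n)) s) t

section Dyadic

variable {T : ℝ} {n : ℕ} {s t : ℝ}

theorem monotone_dyadicPoint (hT : 0 ≤ T) : Monotone (dyadicPoint T n s t) :=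
  ((monotone_id.mul_const (by positivity)).comp Nat.mono_cast |>.max monotone_const).min
    monotone_const

theorem le_dyadicPoint (hst : s ≤ t) (k : ℕ) : s ≤ dyadicPoint T n s t k :=
  le_min (le_max_right _ _) hst

theorem dyadicPoint_le (k : ℕ) : dyadicPoint T n s t k ≤ t :=
  min_le_right _ _

theorem dyadicPoint_zero (hs : 0 ≤ s) (hst : s ≤ t) : dyadicPoint T n s t 0 = s := by
  simp [dyadicPoint, hs, hst]

theorem dyadicPoint_two_pow (hst : s ≤ t) (htT : t ≤ T) : dyadicPoint T n s t (2 ^ n) = t := by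
  simp [dyadicPoint, mul_div_cancel₀ T (pow_ne_zero n two_ne_zero), htT, (hst.trans htT)]

theorem dyadicPoint_succ_two_mul (k : ℕ) :
    dyadicPoint T (n + 1) s t (2 * k) = dyadicPoint T n s t k := by
  simp only [dyadicPoint]
  congr 2
  push_cast
  field_simp
  ring

theorem dyadicPoint_succ_sub_le (hT : 0 ≤ T) (k : ℕ) :
    dyadicPoint T n s t (k + 1) - dyadicPoint T n s t k ≤ T / 2 ^ n := by
  have h : (k : ℝ) * (T / 2 ^ n) ≤ ((k + 1 : ℕ) : ℝ) * (T / 2 ^ n) := by gcongr; omega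
  have e : ((k + 1 : ℕ) : ℝ) * (T / 2 ^ n) - k * (T / 2 ^ n) = T / 2 ^ n := by push_cast; ring
  simp only [dyadicPoint, min_def, max_def]
  split_ifs <;> linarith

end Dyadic

theorem sum_range_two_mul {M : Type*} [AddCommMonoid M] (f : ℕ → M) (n : ℕ) :
    ∑ k ∈ range (2 * n), f k = ∑ k ∈ range n, (f (2 * k) + f (2 * k + 1)) := by
  induction n with
  | zero => simp
  | succ n ih =>
    rw [mul_add, mul_one, sum_range_succ, sum_range_succ, sum_range_succ, ih, add_assoc]

noncomputable def dyadicSum [AddCommMonoid E] (Γ : ℝ → ℝ → E) (T : ℝ) (n : ℕ) (s t : ℝ) : E :=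
  partitionSum Γ (dyadicPoint T n s t) (2 ^ n)

section DyadicSum

variable [SeminormedAddCommGroup E] {Γ : ℝ → ℝ → E} {β Kb T s t : ℝ}

theorem norm_dyadicSum_succ_sub_le (hβ : 1 ≤ β) (hKb : 0 ≤ Kb) (hT : 0 ≤ T)
    (hδ : ∀ s u t : ℝ, 0 ≤ s → s ≤ u → u ≤ t → t ≤ T →
      ‖Γ s t - Γ s u - Γ u t‖ ≤ Kb * (t - s) ^ β)
    (hs : 0 ≤ s) (hst : s ≤ t) (htT : t ≤ T) (n : ℕ) :
    ‖dyadicSum Γ T (n + 1) s t - dyadicSum Γ T n s t‖ ≤ Kb * (T / 2 ^ n) ^ (β - 1) * (t - s) := by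
  have hq : ∀ k, dyadicPoint T (n + 1) s t (2 * k) = dyadicPoint T n s t k :=
    dyadicPoint_succ_two_mul
  have hsplit : dyadicSum Γ T (n + 1) s t - dyadicSum Γ T n s t = ∑ k ∈ range (2 ^ n),
      (Γ (dyadicPoint T n s t k) (dyadicPoint T (n + 1) s t (2 * k + 1)) +
        Γ (dyadicPoint T (n + 1) s t (2 * k + 1)) (dyadicPoint T n s t (k + 1)) -
        Γ (dyadicPoint T n s t k) (dyadicPoint T n s t (k + 1))) := by
    rw [dyadicSum, dyadicSum, partitionSum, partitionSum, pow_succ, mul_comm, sum_range_two_mul,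
      ← sum_sub_distrib]
    refine sum_congr rfl fun k _ => ?_
    rw [hq k, show 2 * k + 1 + 1 = 2 * (k + 1) by ring, hq (k + 1)]
  have hqmono : Monotone (dyadicPoint T (n + 1) s t) := monotone_dyadicPoint hT
  rw [hsplit]
  refine (norm_sum_le_of_norm_le_rpow (σ := dyadicPoint T n s t) (monotone_dyadicPoint hT) hβ
    hKb (fun k _ => dyadicPoint_succ_sub_le hT k) fun k _ => ?_).trans_eq ?_
  · exact norm_add_sub_le hδ (hs.trans (le_dyadicPoint hst k))
      (hq k ▸ hqmono (2 * k).le_succ) (hq (k + 1) ▸ hqmono (by omega))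
      ((dyadicPoint_le _).trans htT)
  · rw [dyadicPoint_two_pow hst htT, dyadicPoint_zero hs hst]

theorem norm_clamp_sub_sub_le (hβ : 0 ≤ β) (hKb : 0 ≤ Kb) (hzero : ∀ t : ℝ, Γ t t = 0)
    (hδ : ∀ s u t : ℝ, 0 ≤ s → s ≤ u → u ≤ t → t ≤ T →
      ‖Γ s t - Γ s u - Γ u t‖ ≤ Kb * (t - s) ^ β)
    (hst : s ≤ t) (htT : t ≤ T) {u v : ℝ} (hu : 0 ≤ u) (huv : u ≤ v) :
    ‖Γ (min (max u 0) t) (min (max v 0) t) - Γ (min (max u 0) s) (min (max v 0) s) -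
      Γ (min (max u s) t) (min (max v s) t)‖ ≤ Kb * (v - u) ^ β := by
  have hbound : 0 ≤ Kb * (v - u) ^ β := mul_nonneg hKb (Real.rpow_nonneg (by linarith) _)
  rw [max_eq_left hu, max_eq_left (hu.trans huv)]
  rcases le_total v s with hvs | hsv
  · rw [min_eq_left hvs, min_eq_left (huv.trans hvs), max_eq_right hvs,
      max_eq_right (huv.trans hvs), min_eq_left hst, min_eq_left (hvs.trans hst),
      min_eq_left ((huv.trans hvs).trans hst), hzero, sub_self, sub_zero, norm_zero]
    exact hbound
  rcases le_total s u with hsu | hus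
  · rw [min_eq_right hsu, min_eq_right (hsu.trans huv), max_eq_left hsu,
      max_eq_left (hsu.trans huv), hzero, sub_zero, sub_self, norm_zero]
    exact hbound
  rw [min_eq_left hus, min_eq_right hsv, max_eq_right hus, max_eq_left hsv,
    min_eq_left (hus.trans hst), min_eq_left hst]
  calc _ ≤ Kb * (min v t - u) ^ β :=
        hδ u s (min v t) hu hus (le_min hsv hst) ((min_le_right _ _).trans htT)
    _ ≤ Kb * (v - u) ^ β := by
        gcongr
        · linarith [le_min hsv hst]
        · exact min_le_left _ _

theorem norm_dyadicSum_sub_sub_le (hβ : 1 ≤ β) (hKb : 0 ≤ Kb) (hT : 0 ≤ T)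
    (hzero : ∀ t : ℝ, Γ t t = 0)
    (hδ : ∀ s u t : ℝ, 0 ≤ s → s ≤ u → u ≤ t → t ≤ T →
      ‖Γ s t - Γ s u - Γ u t‖ ≤ Kb * (t - s) ^ β)
    (hst : s ≤ t) (htT : t ≤ T) (n : ℕ) :
    ‖dyadicSum Γ T n 0 t - dyadicSum Γ T n 0 s - dyadicSum Γ T n s t‖ ≤
      Kb * (T / 2 ^ n) ^ (β - 1) * T := by
  rw [dyadicSum, dyadicSum, dyadicSum, partitionSum, partitionSum, partitionSum,
    ← sum_sub_distrib, ← sum_sub_distrib]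
  refine (norm_sum_le_of_norm_le_rpow (σ := fun k : ℕ => k * (T / 2 ^ n)) (h := T / 2 ^ n)
    ((monotone_id.mul_const (by positivity)).comp Nat.mono_cast) hβ hKb
    (fun k _ => le_of_eq (by push_cast; ring)) fun k _ => norm_clamp_sub_sub_le (by linarith)
      hKb hzero hδ hst htT (by positivity) (by gcongr; omega)).trans_eq ?_
  simp [mul_div_cancel₀ T (pow_ne_zero n two_ne_zero)]

theorem norm_dyadicSum_sub_le (hβ : 1 < β) (hKb : 0 ≤ Kb) (hT : 0 ≤ T)
    (hzero : ∀ t : ℝ, Γ t t = 0)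
    (hδ : ∀ s u t : ℝ, 0 ≤ s → s ≤ u → u ≤ t → t ≤ T →
      ‖Γ s t - Γ s u - Γ u t‖ ≤ Kb * (t - s) ^ β)
    (hs : 0 ≤ s) (hst : s ≤ t) (htT : t ≤ T) (n : ℕ) :
    ‖dyadicSum Γ T n s t - Γ s t‖ ≤ sewingConst β * Kb * (t - s) ^ β := by
  have h := norm_partitionSum_sub_le hβ hKb hzero hδ (2 ^ n) (monotone_dyadicPoint hT)
    ((dyadicPoint_zero hs hst).symm ▸ hs) ((dyadicPoint_two_pow hst htT).symm ▸ htT)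
  rwa [dyadicPoint_zero hs hst, dyadicPoint_two_pow hst htT] at h

end DyadicSum

theorem exists_sewing [NormedAddCommGroup E] [CompleteSpace E] {Γ : ℝ → ℝ → E} {β Kb T : ℝ}
    (hβ : 1 < β) (hKb : 0 ≤ Kb) (hT : 0 ≤ T) (hzero : ∀ t : ℝ, Γ t t = 0)
    (hδ : ∀ s u t : ℝ, 0 ≤ s → s ≤ u → u ≤ t → t ≤ T →
      ‖Γ s t - Γ s u - Γ u t‖ ≤ Kb * (t - s) ^ β) :
    ∃ I : ℝ → E, I 0 = 0 ∧ ∀ s t : ℝ, 0 ≤ s → s ≤ t → t ≤ T →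
      ‖I t - I s - Γ s t‖ ≤ sewingConst β * Kb * (t - s) ^ β := by
  have hcauchy : ∀ t, 0 ≤ t → t ≤ T → CauchySeq fun n => dyadicSum Γ T n 0 t := by
    intro t ht htT
    refine cauchySeq_of_le_geometric _ (Kb * T ^ (β - 1) * t)
      (Real.rpow_lt_one_of_one_lt_of_neg one_lt_two (by linarith : -(β - 1) < 0)) fun n => ?_
    rw [dist_comm, dist_eq_norm]
    refine (norm_dyadicSum_succ_sub_le hβ.le hKb hT hδ le_rfl ht htT n).trans_eq ?_
    rw [div_two_pow_rpow hT, sub_zero]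
    ring
  choose! I hI using fun t (ht : 0 ≤ t) (htT : t ≤ T) =>
    cauchySeq_tendsto_of_complete (hcauchy t ht htT)
  refine ⟨I, tendsto_nhds_unique (hI 0 le_rfl hT) ?_, fun s t hs hst htT => ?_⟩
  · have hD : ∀ n, dyadicSum Γ T n 0 0 = 0 := fun n => by
      simp [dyadicSum, partitionSum, dyadicPoint, hzero]
    simp only [hD]
    exact tendsto_const_nhds
  have hlim := (((hI t (hs.trans hst) htT).sub (hI s hs (hst.trans htT))).sub_const
    (Γ s t)).norm
  have hbound := (((tendsto_div_two_pow_rpow hT (sub_pos.2 hβ)).const_mul Kb).mul_const T).const_add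
    (sewingConst β * Kb * (t - s) ^ β)
  rw [mul_zero, zero_mul, add_zero] at hbound
  refine le_of_tendsto_of_tendsto' hlim hbound fun n => ?_
  calc ‖dyadicSum Γ T n 0 t - dyadicSum Γ T n 0 s - Γ s t‖
      ≤ ‖dyadicSum Γ T n 0 t - dyadicSum Γ T n 0 s - dyadicSum Γ T n s t‖ +
        ‖dyadicSum Γ T n s t - Γ s t‖ := norm_sub_le_norm_sub_add_norm_sub _ _ _
    _ ≤ Kb * (T / 2 ^ n) ^ (β - 1) * T + sewingConst β * Kb * (t - s) ^ β :=
        add_le_add (norm_dyadicSum_sub_sub_le hβ.le hKb hT hzero hδ hst htT n)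
          (norm_dyadicSum_sub_le hβ hKb hT hzero hδ hs hst htT n)
    _ = _ := add_comm _ _

section Consequences

variable [SeminormedAddCommGroup E] {Γ : ℝ → ℝ → E} {I : ℝ → E} {β T : ℝ}

theorem norm_sub_le_of_norm_sub_sub_le {α C Ka Kb s t : ℝ} (hα : 0 < α) (hαβ : α ≤ β)
    (hC : 0 ≤ C) (hKa : 0 ≤ Ka) (hKb : 0 ≤ Kb) (hs : 0 ≤ s) (hst : s ≤ t) (htT : t ≤ T)
    (hI : ‖I t - I s - Γ s t‖ ≤ C * Kb * (t - s) ^ β) (hΓ : ‖Γ s t‖ ≤ Ka * (t - s) ^ α) :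
    ‖I t - I s‖ ≤ (1 + C * T ^ (β - α)) * (Ka + Kb) * (t - s) ^ α := by
  have hts : 0 ≤ t - s := sub_nonneg.2 hst
  have hpow : (t - s) ^ β ≤ T ^ (β - α) * (t - s) ^ α :=
    calc (t - s) ^ β = (t - s) ^ (β - α) * (t - s) ^ α := by
          rw [← Real.rpow_add' hts (by linarith), sub_add_cancel]
      _ ≤ T ^ (β - α) * (t - s) ^ α := by gcongr; linarith
  have hslack : 0 ≤ (Kb + C * T ^ (β - α) * Ka) * (t - s) ^ α := by
    have : 0 ≤ T ^ (β - α) := Real.rpow_nonneg (by linarith) _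
    positivity
  calc ‖I t - I s‖ ≤ ‖Γ s t‖ + ‖I t - I s - Γ s t‖ := norm_le_insert' _ _
    _ ≤ Ka * (t - s) ^ α + C * Kb * (T ^ (β - α) * (t - s) ^ α) := by
        gcongr
        exact hI.trans (by gcongr)
    _ ≤ (1 + C * T ^ (β - α)) * (Ka + Kb) * (t - s) ^ α := by nlinarith

theorem sum_fin_eq_partitionSum {M : Type*} [AddCommMonoid M] (Γ : ℝ → ℝ → M) {n : ℕ}
    (τ : Fin (n + 1) → ℝ) :
    ∑ i : Fin n, Γ (τ i.castSucc) (τ i.succ) = partitionSum Γ (fun k => τ (Fin.clamp k n)) n := by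
  rw [partitionSum, ← Fin.sum_univ_eq_sum_range]
  refine Fintype.sum_congr _ _ fun i => ?_
  congr 2 <;> ext <;> simp [Fin.clamp]

theorem norm_sum_fin_sub_le {K h t : ℝ} {n : ℕ} {τ : Fin (n + 1) → ℝ} (hβ : 1 ≤ β) (hK : 0 ≤ K)
    (hI : ∀ s t : ℝ, 0 ≤ s → s ≤ t → t ≤ T → ‖I t - I s - Γ s t‖ ≤ K * (t - s) ^ β)
    (htT : t ≤ T) (hτ : IsPartition 0 t τ) (hmesh : MeshLE τ h) :
    ‖∑ i : Fin n, Γ (τ i.castSucc) (τ i.succ) - (I t - I 0)‖ ≤ K * h ^ (β - 1) * t := by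
  obtain ⟨hmono, h0, hlast⟩ := hτ
  have hσ0 : τ (Fin.clamp 0 n) = 0 := h0
  have hσn : τ (Fin.clamp n n) = t := by rw [Fin.clamp_eq_last n n le_rfl, hlast]
  have hstep : ∀ k < n, τ (Fin.clamp (k + 1) n) - τ (Fin.clamp k n) ≤ h := fun k hk => by
    convert hmesh ⟨k, hk⟩ using 3 <;> ext <;> simp [Fin.clamp] <;> omega
  have := norm_partitionSum_sub_sub_le (σ := fun k => τ (Fin.clamp k n)) hβ hK hI
    (hmono.comp Fin.clamp_monotone) hσ0.ge (hσn.trans_le htT) hstep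
  rwa [hσ0, hσn, sub_zero, ← sum_fin_eq_partitionSum] at this

theorem exists_forall_norm_sum_fin_sub_le {K t ε : ℝ} (hβ : 1 < β) (hK : 0 ≤ K) (hT : 0 < T)
    (hI : ∀ s t : ℝ, 0 ≤ s → s ≤ t → t ≤ T → ‖I t - I s - Γ s t‖ ≤ K * (t - s) ^ β)
    (hI0 : I 0 = 0) (htT : t ≤ T) (hε : 0 < ε) :
    ∃ δ > 0, ∀ (n : ℕ) (τ : Fin (n + 1) → ℝ), IsPartition 0 t τ → MeshLE τ δ →
      ‖∑ i : Fin n, Γ (τ i.castSucc) (τ i.succ) - I t‖ ≤ ε := by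
  have hlim : Tendsto (fun n : ℕ => K * (T / 2 ^ n) ^ (β - 1) * T) atTop (𝓝 0) := by
    simpa using ((tendsto_div_two_pow_rpow hT.le (sub_pos.2 hβ)).const_mul K).mul_const T
  obtain ⟨N, hN⟩ := (hlim.eventually_lt_const hε).exists
  refine ⟨T / 2 ^ N, by positivity, fun n τ hτ hmesh => ?_⟩
  have h := norm_sum_fin_sub_le hβ.le hK hI htT hτ hmesh
  rw [hI0, sub_zero] at h
  refine h.trans (le_trans ?_ hN.le)
  gcongr

end Consequences

theorem eq_of_norm_sub_sub_le [NormedAddCommGroup E] {Γ : ℝ → ℝ → E} {I J : ℝ → E} {β K T t : ℝ}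
    (hβ : 1 < β) (hK : 0 ≤ K) (hT : 0 ≤ T) (h0 : I 0 = J 0)
    (hI : ∀ s t : ℝ, 0 ≤ s → s ≤ t → t ≤ T → ‖I t - I s - Γ s t‖ ≤ K * (t - s) ^ β)
    (hJ : ∀ s t : ℝ, 0 ≤ s → s ≤ t → t ≤ T → ‖J t - J s - Γ s t‖ ≤ K * (t - s) ^ β)
    (ht : 0 ≤ t) (htT : t ≤ T) : I t = J t := by
  have hclose : ∀ (n : ℕ) (F : ℝ → E),
      (∀ s t : ℝ, 0 ≤ s → s ≤ t → t ≤ T → ‖F t - F s - Γ s t‖ ≤ K * (t - s) ^ β) →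
      ‖dyadicSum Γ T n 0 t - (F t - F 0)‖ ≤ K * (T / 2 ^ n) ^ (β - 1) * t := fun n F hF => by
    have h := norm_partitionSum_sub_sub_le hβ.le hK hF (monotone_dyadicPoint (n := n) hT)
      (dyadicPoint_zero le_rfl ht).ge ((dyadicPoint_two_pow ht htT).trans_le htT)
      fun k _ => dyadicPoint_succ_sub_le hT k
    rwa [dyadicPoint_zero le_rfl ht, dyadicPoint_two_pow ht htT, sub_zero] at h
  have hbound : ∀ n : ℕ, ‖I t - J t‖ ≤ 2 * (K * (T / 2 ^ n) ^ (β - 1) * t) := fun n =>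
    calc ‖I t - J t‖ =
          ‖(dyadicSum Γ T n 0 t - (J t - J 0)) - (dyadicSum Γ T n 0 t - (I t - I 0))‖ := by
          rw [h0]; congr 1; abel
      _ ≤ _ := (norm_sub_le _ _).trans (by linarith [hclose n I hI, hclose n J hJ])
  have hlim : Tendsto (fun n : ℕ => 2 * (K * (T / 2 ^ n) ^ (β - 1) * t)) atTop (𝓝 0) := by
    simpa using (((tendsto_div_two_pow_rpow hT (sub_pos.2 hβ)).const_mul K).mul_const t).const_mul 2
  exact sub_eq_zero.1 (norm_le_zero_iff.1 (ge_of_tendsto' hlim hbound))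

end Sewing

open Sewing

/-- The Sewing Lemma: for `0 < α ≤ 1 < β` and `Γ : Δ₂ → E` with `Γ_{t,t} = 0`,
`‖Γ_{s,t}‖ ≤ Ka (t-s)^α` and `‖δΓ_{s,u,t}‖ ≤ Kb (t-s)^β`, there is a unique
`I ∈ C^α([0,T];E)` with `I_0 = 0` and `‖I_{s,t} - Γ_{s,t}‖ ≤ C Kb (t-s)^β`, where `C`
depends only on `β` and the Hölder bound constant `C'` only on `β, T`; moreover `I_t` is
the limit of the Riemann sums `Σ_i Γ_{t_i,t_{i+1}}` along partitions of `[0,t]` with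
vanishing mesh. -/
theorem stmt18 (β : ℝ) (hβ : 1 < β) :
    ∃ C : ℝ, 0 < C ∧
      ∀ (α T : ℝ), 0 < α → α ≤ 1 → 0 < T →
      ∃ C' : ℝ, 0 < C' ∧
        ∀ (E : Type u) [NormedAddCommGroup E] [NormedSpace ℝ E] [CompleteSpace E],
        ∀ (Γ : ℝ → ℝ → E) (Ka Kb : ℝ),
        (∀ t : ℝ, Γ t t = 0) →
        (∀ s t : ℝ, 0 ≤ s → s ≤ t → t ≤ T → ‖Γ s t‖ ≤ Ka * (t - s) ^ α) →
        (∀ s u t : ℝ, 0 ≤ s → s ≤ u → u ≤ t → t ≤ T →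
          ‖Γ s t - Γ s u - Γ u t‖ ≤ Kb * (t - s) ^ β) →
        ∃ I : ℝ → E,
          I 0 = 0 ∧
          (∀ s t : ℝ, 0 ≤ s → s ≤ t → t ≤ T →
            ‖(I t - I s) - Γ s t‖ ≤ C * Kb * (t - s) ^ β) ∧
          (∀ s t : ℝ, 0 ≤ s → s ≤ t → t ≤ T →
            ‖I t - I s‖ ≤ C' * (Ka + Kb) * (t - s) ^ α) ∧
          (∀ t : ℝ, 0 ≤ t → t ≤ T → ∀ ε > (0:ℝ), ∃ δ > (0:ℝ),
            ∀ (n : ℕ) (τ : Fin (n + 1) → ℝ), IsPartition 0 t τ → MeshLE τ δ →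
              ‖(∑ i : Fin n, Γ (τ i.castSucc) (τ i.succ)) - I t‖ ≤ ε) ∧
          (∀ J : ℝ → E, J 0 = 0 →
            (∃ K : ℝ, ∀ s t : ℝ, 0 ≤ s → s ≤ t → t ≤ T →
              ‖J t - J s‖ ≤ K * (t - s) ^ α) →
            (∀ s t : ℝ, 0 ≤ s → s ≤ t → t ≤ T →
              ‖(J t - J s) - Γ s t‖ ≤ C * Kb * (t - s) ^ β) →
            ∀ t : ℝ, 0 ≤ t → t ≤ T → J t = I t) := by
  have hC := sewingConst_pos hβ
  refine ⟨sewingConst β, hC, fun α T hα _ hT =>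
    ⟨1 + sewingConst β * T ^ (β - α), by positivity, ?_⟩⟩
  intro E _ _ _ Γ Ka Kb hzero hΓ hδ
  have hTpos : ∀ γ : ℝ, 0 < (T - 0) ^ γ := fun γ => Real.rpow_pos_of_pos (by linarith) γ
  have hKa : 0 ≤ Ka := nonneg_of_mul_nonneg_left
    ((norm_nonneg _).trans (hΓ 0 T le_rfl hT.le le_rfl)) (hTpos α)
  have hKb : 0 ≤ Kb := nonneg_of_mul_nonneg_left
    ((norm_nonneg _).trans (hδ 0 0 T le_rfl le_rfl hT.le le_rfl)) (hTpos β)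
  obtain ⟨I, hI0, hI⟩ := exists_sewing hβ hKb hT.le hzero hδ
  refine ⟨I, hI0, hI, fun s t hs hst htT => ?_, fun t _ htT ε hε => ?_,
    fun J hJ0 _ hJ t ht htT => ?_⟩
  · exact norm_sub_le_of_norm_sub_sub_le hα (by linarith) hC.le hKa hKb hs hst htT
      (hI s t hs hst htT) (hΓ s t hs hst htT)
  · exact exists_forall_norm_sum_fin_sub_le hβ (mul_nonneg hC.le hKb) hT hI hI0 htT hε
  · exact eq_of_norm_sub_sub_le hβ (mul_nonneg hC.le hKb) hT.le (hJ0.trans hI0.symm) hJ hI ht htT
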